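/- arXiv:1803.02885 — 5 statements merged into one kernel-verified Lean document; each statement's English description precedes it below -/
import Mathlib

section
/- For every real number ε with −1 ≤ ε ≤ 1 + √5 and every y ∈ [0, 1], one has 4(1 + ε) − 2εy − ε²y² ≥ 0. -/
/-- For every `ε` with `−1 ≤ ε ≤ 1 + √5` and every `y ∈ [0,1]`,
`4(1+ε) − 2εy − ε²y² ≥ 0`. -/
theorem stmt_5 (ε y : ℝ) (hε₁ : -1 ≤ ε) (hε₂ : ε ≤ 1 + Real.sqrt 5)
    (hy : y ∈ Set.Icc (0 : ℝ) 1) :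
    4 * (1 + ε) - 2 * ε * y - ε ^ 2 * y ^ 2 ≥ 0 := by
  obtain ⟨hy0, hy1⟩ := hy
  have h5 : Real.sqrt 5 ^ 2 = 5 := Real.sq_sqrt (by norm_num)
  have hs : (0:ℝ) ≤ Real.sqrt 5 := Real.sqrt_nonneg 5
  have hf1 : 4 + 2*ε - ε^2 ≥ 0 := by
    nlinarith [mul_nonneg (sub_nonneg.2 hε₂) (by nlinarith : (0:ℝ) ≤ ε - (1 - Real.sqrt 5))]
  nlinarith [mul_nonneg hy0 (sub_nonneg.2 hy1), sq_nonneg ε, mul_nonneg (mul_nonneg hy0 (sub_nonneg.2 hy1)) (sq_nonneg ε), mul_nonneg hy0 hf1, mul_nonneg (sub_nonneg.2 hy1) (by linarith : (0:ℝ) ≤ 4 + 4*ε)]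
end

section
/- Let a, ε, H be real numbers with a ≠ 0, −2 ≤ ε < −1, and H² > a²·(|ε| − 1). Then for every y ∈ [0, 1], 4H² + a²·( 4(1 + ε) − 2εy − ε²y² ) > 0. -/
/-- If `a ≠ 0`, `−2 ≤ ε < −1` and `H² > a²(|ε| − 1)`, then for every
`y ∈ [0,1]`, `4H² + a²(4(1+ε) − 2εy − ε²y²) > 0`. -/
theorem stmt_8 (a ε H : ℝ) (ha : a ≠ 0) (hε₁ : -2 ≤ ε) (hε₂ : ε < -1)
    (hH : H ^ 2 > a ^ 2 * (|ε| - 1)) :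
    ∀ y ∈ Set.Icc (0 : ℝ) 1,
      4 * H ^ 2 + a ^ 2 * (4 * (1 + ε) - 2 * ε * y - ε ^ 2 * y ^ 2) > 0 := by
  intro y hy
  obtain ⟨hy0, hy1⟩ := hy
  rw [abs_of_neg (by linarith)] at hH
  have h1 : 2 + ε * y ≥ 0 := by nlinarith
  have h2 : a ^ 2 * (-ε * y * (2 + ε * y)) ≥ 0 :=
    mul_nonneg (sq_nonneg a) (mul_nonneg (mul_nonneg (by linarith) hy0) h1)
  nlinarith [sq_nonneg a]
end

section
/- Let a, ε, H be real numbers with a ≠ 0, ε < −2, and H² > a²·( ε²/4 + |ε|/2 − 1 ). Then for every y ∈ [0, 1], 4H² + a²·( 4(1 + ε) − 2εy − ε²y² ) > 0. -/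
/-- If `a ≠ 0`, `ε < −2` and `H² > a²(ε²/4 + |ε|/2 − 1)`, then for every
`y ∈ [0,1]`, `4H² + a²(4(1+ε) − 2εy − ε²y² ) > 0`. -/
theorem stmt_9 (a ε H : ℝ) (ha : a ≠ 0) (hε : ε < -2)
    (hH : H ^ 2 > a ^ 2 * (ε ^ 2 / 4 + |ε| / 2 - 1)) :
    ∀ y ∈ Set.Icc (0 : ℝ) 1,
      4 * H ^ 2 + a ^ 2 * (4 * (1 + ε) - 2 * ε * y - ε ^ 2 * y ^ 2) > 0 := by
  intro y ⟨hy0, hy1⟩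
  rw [abs_of_neg (by linarith)] at hH
  nlinarith [sq_nonneg a, mul_nonneg (sq_nonneg a) (mul_nonneg (by linarith : (0:ℝ) ≤ 1 - y) (mul_nonneg (by linarith : (0:ℝ) ≤ -ε) (by nlinarith : (0:ℝ) ≤ -(2 + ε * (1 + y)))))]
end

section
/- Let b > 0 and for s ∈ (−b, b) set K_tan(s) = b⁴/( b⁴ + (1 − b²)s² ) and K_rad(s) = b⁶/( b⁴ + (1 − b²)s² )². Then b⁴ + (1−b²)s² > 0 and K_tan(s), K_rad(s) > 0 for all s ∈ (−b, b); if b ≥ 1 then 1/b² ≤ K_rad(s)/K_tan(s) ≤ 1 for all s ∈ (−b, b); if 0 < b ≤ 1 then 1 ≤ K_rad(s)/K_tan(s) ≤ 1/b² for all s ∈ (−b, b); and the inequality K_rad(s) ≤ (2 + √5)·K_tan(s) holds for all s ∈ (−b, b) if and only if b² ≥ 1/(2 + √5). -/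
/-!
The ratio `K_rad / K_tan` equals `b² / D(s)` with `D(s) = b⁴ + (1 - b²) s²`. As a function of `s²`, `D` is
affine, equal to `b⁴` at `s = 0` and to `b²` at `s = ±b`, so on `(-b, b)` it lies between `b⁴` and
`b²`. Hence the ratio lies between `1` and `1 / b²`, the value `1 / b²` being attained at `s = 0`.
Since `2 + √5 ≥ 1`, the bound `K_rad ≤ (2 + √5) K_tan` is therefore equivalent to `1 / b² ≤ 2 + √5`.
-/

open Set

lemma div_sq_div_div_eq {K : Type*} [Field K] (b D : K) :
    b ^ 6 / D ^ 2 / (b ^ 4 / D) = b ^ 2 / D := by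
  rcases eq_or_ne D 0 with rfl | hD
  · simp
  rcases eq_or_ne b 0 with rfl | hb
  · simp
  field_simp

section Denominator

variable {b s : ℝ}

lemma sq_le_denom_le_pow_four (hb : 1 ≤ b ^ 2) (hs : s ^ 2 ≤ b ^ 2) :
    b ^ 2 ≤ b ^ 4 + (1 - b ^ 2) * s ^ 2 ∧ b ^ 4 + (1 - b ^ 2) * s ^ 2 ≤ b ^ 4 := by
  constructor <;> nlinarith [mul_nonneg (sub_nonneg.2 hb) (sub_nonneg.2 hs), sq_nonneg s]

lemma pow_four_le_denom_le_sq (hb : b ^ 2 ≤ 1) (hs : s ^ 2 ≤ b ^ 2) :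
    b ^ 4 ≤ b ^ 4 + (1 - b ^ 2) * s ^ 2 ∧ b ^ 4 + (1 - b ^ 2) * s ^ 2 ≤ b ^ 2 := by
  constructor <;> nlinarith [mul_nonneg (sub_nonneg.2 hb) (sub_nonneg.2 hs), sq_nonneg s]

lemma denom_pos (hb : b ≠ 0) (hs : s ^ 2 ≤ b ^ 2) : 0 < b ^ 4 + (1 - b ^ 2) * s ^ 2 := by
  rcases le_total 1 (b ^ 2) with h | h
  · exact (by positivity : 0 < b ^ 2).trans_le (sq_le_denom_le_pow_four h hs).1
  · exact (by positivity : 0 < b ^ 4).trans_le (pow_four_le_denom_le_sq h hs).1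

lemma one_div_sq_le_div_denom_le_one (hb : 1 ≤ b ^ 2) (hs : s ^ 2 ≤ b ^ 2) :
    1 / b ^ 2 ≤ b ^ 2 / (b ^ 4 + (1 - b ^ 2) * s ^ 2) ∧
      b ^ 2 / (b ^ 4 + (1 - b ^ 2) * s ^ 2) ≤ 1 := by
  obtain ⟨hlow, hup⟩ := sq_le_denom_le_pow_four hb hs
  have hb2 : 0 < b ^ 2 := one_pos.trans_le hb
  constructor
  · calc 1 / b ^ 2 = b ^ 2 / b ^ 4 := by field_simp
      _ ≤ _ := div_le_div_of_nonneg_left hb2.le (hb2.trans_le hlow) hup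
  · calc _ ≤ b ^ 2 / b ^ 2 := div_le_div_of_nonneg_left hb2.le hb2 hlow
      _ = 1 := div_self hb2.ne'

lemma one_le_div_denom_le_one_div_sq (hb0 : b ≠ 0) (hb : b ^ 2 ≤ 1) (hs : s ^ 2 ≤ b ^ 2) :
    1 ≤ b ^ 2 / (b ^ 4 + (1 - b ^ 2) * s ^ 2) ∧
      b ^ 2 / (b ^ 4 + (1 - b ^ 2) * s ^ 2) ≤ 1 / b ^ 2 := by
  obtain ⟨hlow, hup⟩ := pow_four_le_denom_le_sq hb hs
  have hb2 : 0 < b ^ 2 := by positivity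
  have hb4 : 0 < b ^ 4 := by positivity
  constructor
  · calc (1 : ℝ) = b ^ 2 / b ^ 2 := (div_self hb2.ne').symm
      _ ≤ _ := div_le_div_of_nonneg_left hb2.le (hb4.trans_le hlow) hup
  · calc _ ≤ b ^ 2 / b ^ 4 := div_le_div_of_nonneg_left hb2.le hb4 hlow
      _ = 1 / b ^ 2 := by field_simp

lemma forall_div_denom_le_iff (hb : 0 < b) {c : ℝ} (hc : 1 ≤ c) :
    (∀ s ∈ Ioo (-b) b, b ^ 2 / (b ^ 4 + (1 - b ^ 2) * s ^ 2) ≤ c) ↔ 1 / c ≤ b ^ 2 := by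
  have hb2 : 0 < b ^ 2 := by positivity
  rw [one_div_le (by linarith) hb2]
  constructor
  · intro h
    have h0 := h 0 ⟨neg_lt_zero.2 hb, hb⟩
    rwa [show b ^ 2 / (b ^ 4 + (1 - b ^ 2) * 0 ^ 2) = 1 / b ^ 2 by field_simp; ring] at h0
  · intro h s hs
    have hs2 : s ^ 2 ≤ b ^ 2 := (sq_lt_sq' hs.1 hs.2).le
    rcases le_total 1 (b ^ 2) with hb1 | hb1
    · exact (one_div_sq_le_div_denom_le_one hb1 hs2).2.trans hc
    · exact (one_le_div_denom_le_one_div_sq hb.ne' hb1 hs2).2.trans h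

end Denominator

/-- Curvature estimates for the generalized ellipsoid: with
`K_tan(s) = b⁴/(b⁴+(1−b²)s²)` and `K_rad(s) = b⁶/(b⁴+(1−b²)s²)²` on `(−b,b)`,
the denominator and both curvatures are positive; if `b ≥ 1` then
`1/b² ≤ K_rad/K_tan ≤ 1`; if `b ≤ 1` then `1 ≤ K_rad/K_tan ≤ 1/b²`; and
`K_rad ≤ (2+√5)K_tan` holds on all of `(−b,b)` iff `b² ≥ 1/(2+√5)`. -/
theorem stmt_18 (b : ℝ) (hb : 0 < b)
    (Ktan Krad : ℝ → ℝ)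
    (hKtan : ∀ s, Ktan s = b ^ 4 / (b ^ 4 + (1 - b ^ 2) * s ^ 2))
    (hKrad : ∀ s, Krad s = b ^ 6 / (b ^ 4 + (1 - b ^ 2) * s ^ 2) ^ 2) :
    (∀ s ∈ Set.Ioo (-b) b,
      0 < b ^ 4 + (1 - b ^ 2) * s ^ 2 ∧ 0 < Ktan s ∧ 0 < Krad s) ∧
    (1 ≤ b → ∀ s ∈ Set.Ioo (-b) b,
      1 / b ^ 2 ≤ Krad s / Ktan s ∧ Krad s / Ktan s ≤ 1) ∧
    (b ≤ 1 → ∀ s ∈ Set.Ioo (-b) b,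
      1 ≤ Krad s / Ktan s ∧ Krad s / Ktan s ≤ 1 / b ^ 2) ∧
    ((∀ s ∈ Set.Ioo (-b) b, Krad s ≤ (2 + Real.sqrt 5) * Ktan s) ↔
      1 / (2 + Real.sqrt 5) ≤ b ^ 2) := by
  have hsq : ∀ s ∈ Ioo (-b) b, s ^ 2 ≤ b ^ 2 := fun s hs => (sq_lt_sq' hs.1 hs.2).le
  have hD : ∀ s ∈ Ioo (-b) b, 0 < b ^ 4 + (1 - b ^ 2) * s ^ 2 :=
    fun s hs => denom_pos hb.ne' (hsq s hs)
  have hKtan_pos : ∀ s ∈ Ioo (-b) b, 0 < Ktan s := fun s hs => by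
    have := hD s hs
    rw [hKtan]; positivity
  have hratio : ∀ s ∈ Ioo (-b) b, Krad s / Ktan s = b ^ 2 / (b ^ 4 + (1 - b ^ 2) * s ^ 2) :=
    fun s hs => by rw [hKrad, hKtan, div_sq_div_div_eq]
  refine ⟨fun s hs => ⟨hD s hs, hKtan_pos s hs, ?_⟩, fun hb1 s hs => ?_, fun hb1 s hs => ?_, ?_⟩
  · have := hD s hs
    rw [hKrad]; positivity
  · rw [hratio s hs]
    exact one_div_sq_le_div_denom_le_one (one_le_pow₀ hb1) (hsq s hs)
  · rw [hratio s hs]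
    exact one_le_div_denom_le_one_div_sq hb.ne' (pow_le_one₀ hb.le hb1) (hsq s hs)
  · rw [← forall_div_denom_le_iff hb (by linarith [Real.sqrt_nonneg 5])]
    refine forall₂_congr fun s hs => ?_
    rw [← hratio s hs, div_le_iff₀ (hKtan_pos s hs), mul_comm]
end

section
/- Let b > 0 and define u : ℝ → ℝ by u(s) = √(b² + s²)/b. Then u is twice differentiable and for all s ∈ ℝ: 1/( u(s)²·(1 + u′(s)²) ) = b⁴/( b⁴ + (1 + b²)s² ) and −u″(s)/( u(s)·(1 + u′(s)²)² ) = −b⁶/( b⁴ + (1 + b²)s² )²; moreover, setting K_tan(s) = b⁴/( b⁴ + (1 + b²)s² ) and K_rad(s) = −b⁶/( b⁴ + (1 + b²)s² )², one has −1/b² ≤ K_rad(s)/K_tan(s) < 0 for all s ∈ ℝ. -/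
/-!
Writing `r = √(b² + s²)`, the profile is `u = r/b` with `u′ = s/(b r)` and `u″ = b/r³`.
Hence `1 + u′² = D/(b² r²)` with `D = b⁴ + (1 + b²)s²`, and both curvature formulas become
rational identities in `r` once `r² = b² + s²` is substituted. The ratio `K_rad/K_tan` is
`−b²/D`, and `D ≥ b⁴` gives the lower bound `−1/b²`.
-/

open Real

noncomputable def hyperboloidProfile (b : ℝ) (s : ℝ) : ℝ := √(b ^ 2 + s ^ 2) / b

lemma hasDerivAt_sqrt_add_sq {a : ℝ} (ha : 0 < a) (x : ℝ) :
    HasDerivAt (fun t => √(a + t ^ 2)) (x / √(a + x ^ 2)) x := by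
  have h := ((hasDerivAt_pow 2 x).const_add a).sqrt (by positivity)
  convert h using 1
  push_cast
  ring

namespace hyperboloidProfile

variable {b : ℝ}

lemma hasDerivAt (hb : b ≠ 0) (x : ℝ) :
    HasDerivAt (hyperboloidProfile b) (x / (b * √(b ^ 2 + x ^ 2))) x := by
  have h := (hasDerivAt_sqrt_add_sq (by positivity : 0 < b ^ 2) x).div_const b
  rwa [div_div, mul_comm] at h

lemma deriv_eq (hb : b ≠ 0) :
    deriv (hyperboloidProfile b) = fun x => x / (b * √(b ^ 2 + x ^ 2)) :=
  funext fun x => (hasDerivAt hb x).deriv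

lemma hasDerivAt_deriv (hb : b ≠ 0) (x : ℝ) :
    HasDerivAt (deriv (hyperboloidProfile b)) (b / √(b ^ 2 + x ^ 2) ^ 3) x := by
  have hr2 : √(b ^ 2 + x ^ 2) ^ 2 = b ^ 2 + x ^ 2 := sq_sqrt (by positivity)
  rw [deriv_eq hb]
  have h := (hasDerivAt_id' x).div
    ((hasDerivAt_sqrt_add_sq (by positivity : 0 < b ^ 2) x).const_mul b) (by positivity)
  refine h.congr_deriv ?_
  field_simp
  rw [hr2]
  ring

end hyperboloidProfile

section CurvatureIdentities

variable {b s r : ℝ}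

lemma hyperboloid_tangential_curvature_eq (hb : b ≠ 0) (hr : r ≠ 0)
    (hr2 : r ^ 2 = b ^ 2 + s ^ 2) :
    1 / ((r / b) ^ 2 * (1 + (s / (b * r)) ^ 2)) = b ^ 4 / (b ^ 4 + (1 + b ^ 2) * s ^ 2) := by
  field_simp
  rw [hr2]
  ring

lemma hyperboloid_radial_curvature_eq (hb : b ≠ 0) (hr : r ≠ 0)
    (hr2 : r ^ 2 = b ^ 2 + s ^ 2) :
    -(b / r ^ 3) / (r / b * (1 + (s / (b * r)) ^ 2) ^ 2)
      = -b ^ 6 / (b ^ 4 + (1 + b ^ 2) * s ^ 2) ^ 2 := by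
  field_simp
  rw [hr2]
  ring

lemma hyperboloid_curvature_ratio_mem_Ico (hb : b ≠ 0) :
    (-b ^ 6 / (b ^ 4 + (1 + b ^ 2) * s ^ 2) ^ 2) / (b ^ 4 / (b ^ 4 + (1 + b ^ 2) * s ^ 2))
      ∈ Set.Ico (-1 / b ^ 2) 0 := by
  have hD : 0 < b ^ 4 + (1 + b ^ 2) * s ^ 2 := by positivity
  have hratio :
      (-b ^ 6 / (b ^ 4 + (1 + b ^ 2) * s ^ 2) ^ 2) / (b ^ 4 / (b ^ 4 + (1 + b ^ 2) * s ^ 2))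
        = -b ^ 2 / (b ^ 4 + (1 + b ^ 2) * s ^ 2) := by
    field_simp
  rw [hratio]
  constructor
  · rw [div_le_div_iff₀ (by positivity) hD]
    nlinarith [sq_nonneg s, sq_nonneg (b * s)]
  · exact div_neg_of_neg_of_pos (neg_lt_zero.mpr (by positivity)) hD

end CurvatureIdentities

/-- The profile function `u(s) = √(b² + s²)/b` of the generalized hyperboloid
is twice differentiable on `ℝ` with
`1/(u²(1+u′²)) = b⁴/(b⁴+(1+b²)s²)` and
`−u″/(u(1+u′²)²) = −b⁶/(b⁴+(1+b²)s²)²`; moreover, for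
`K_tan(s) = b⁴/(b⁴+(1+b²)s²)` and `K_rad(s) = −b⁶/(b⁴+(1+b²)s²)²`, one has
`−1/b² ≤ K_rad/K_tan < 0` everywhere. -/
theorem stmt_19 (b : ℝ) (hb : 0 < b)
    (u : ℝ → ℝ) (hu : ∀ s, u s = Real.sqrt (b ^ 2 + s ^ 2) / b)
    (Ktan Krad : ℝ → ℝ)
    (hKtan : ∀ s, Ktan s = b ^ 4 / (b ^ 4 + (1 + b ^ 2) * s ^ 2))
    (hKrad : ∀ s, Krad s = -b ^ 6 / (b ^ 4 + (1 + b ^ 2) * s ^ 2) ^ 2) :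
    ∀ s : ℝ,
      DifferentiableAt ℝ u s ∧
      DifferentiableAt ℝ (deriv u) s ∧
      1 / ((u s) ^ 2 * (1 + (deriv u s) ^ 2))
        = b ^ 4 / (b ^ 4 + (1 + b ^ 2) * s ^ 2) ∧
      -(deriv (deriv u) s) / (u s * (1 + (deriv u s) ^ 2) ^ 2)
        = -b ^ 6 / (b ^ 4 + (1 + b ^ 2) * s ^ 2) ^ 2 ∧
      -1 / b ^ 2 ≤ Krad s / Ktan s ∧ Krad s / Ktan s < 0 := by
  intro s
  obtain rfl : u = hyperboloidProfile b := funext hu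
  have hr : 0 < √(b ^ 2 + s ^ 2) := by positivity
  have hr2 : √(b ^ 2 + s ^ 2) ^ 2 = b ^ 2 + s ^ 2 := sq_sqrt (by positivity)
  refine ⟨(hyperboloidProfile.hasDerivAt hb.ne' s).differentiableAt,
    (hyperboloidProfile.hasDerivAt_deriv hb.ne' s).differentiableAt, ?_, ?_, ?_⟩
  · rw [hyperboloidProfile.deriv_eq hb.ne']
    exact hyperboloid_tangential_curvature_eq hb.ne' hr.ne' hr2
  · rw [(hyperboloidProfile.hasDerivAt_deriv hb.ne' s).deriv, hyperboloidProfile.deriv_eq hb.ne']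
    exact hyperboloid_radial_curvature_eq hb.ne' hr.ne' hr2
  · rw [hKrad, hKtan]
    exact hyperboloid_curvature_ratio_mem_Ico hb.ne'
end
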